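/- Let n, a, b, t be positive integers and let F be an a-uniform family and G a b-uniform family of subsets of [n] such that F and G are cross-t-intersecting. Then there exist an a-uniform family F* with |F*| = |F| and a b-uniform family G* with |G*| = |G| such that F* × G* is contained in the union, over all u, v, s ∈ [n] with u + v = s + t, of the Cartesian products {F ∈ C([n],a) : |F ∩ [s]| ≥ u} × {G ∈ C([n],b) : |G ∩ [s]| ≥ v}. -/

import Mathlib

open Finset

/-- The ground set `[n] = {1,…,n}`. -/
def gs (n : ℕ) : Finset ℕ := Finset.Icc 1 n

/-- `F` is an `m`-uniform family of subsets of `[n]`. -/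
def UniformOn (n m : ℕ) (F : Finset (Finset ℕ)) : Prop :=
  ∀ A ∈ F, A ⊆ gs n ∧ A.card = m

/-- `F` and `G` are cross-`t`-intersecting. -/
def CrossInt (t : ℕ) (F G : Finset (Finset ℕ)) : Prop :=
  ∀ A ∈ F, ∀ B ∈ G, t ≤ (A ∩ B).card

/-- The family `{A ∈ C([n],m) : |A ∩ [s]| ≥ u}` appearing in a Hirschorn pair. -/
def HirschF (n m s u : ℕ) : Finset (Finset ℕ) :=
  ((gs n).powersetCard m).filter (fun A => u ≤ (A ∩ gs s).card)

/-- The maximum of `|F| ⬝ |G|` over all Hirschorn pairs `(F, G)` with parameters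
`u, v, s ∈ [n]`, `u + v = s + t`. -/
noncomputable def NHatProd (n a b t : ℕ) : ℕ :=
  sSup {x : ℕ | ∃ u ∈ gs n, ∃ v ∈ gs n, ∃ s ∈ gs n, u + v = s + t ∧
    x = (HirschF n a s u).card * (HirschF n b s v).card}

/-!
Shift `G` by the compressions `{i} {j}`, `0 < i < j`, applied to `F` and `G` simultaneously: they
preserve sizes, uniformity and cross-`t`-intersection. For shifted `G`, any `A` meeting every
member of `G` in at least `t` points satisfies `|A ∩ [s]| + |B ∩ [s]| ≥ s + t` for some `s`, for
each `B ∈ G`. Otherwise, move the largest element `d` of `A ∩ B` to the largest gap `y < d` of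
`A ∪ B`: the new set stays in `G`, still violates every inequality, and meets `A` in one point
less, so iterating produces a member of `G` meeting `A` in fewer than `t` points. Then
`u = |A ∩ [s]|`, `v = s + t - u` put `(A, B)` in the required product.
-/

section InsertErase

variable {α : Type*} [DecidableEq α] {y d : α} {B X : Finset α}

lemma card_le_card_insert_erase (hy : y ∉ B) : B.card ≤ (insert y (B.erase d)).card := by
  rw [card_insert_of_notMem fun h => hy (mem_of_mem_erase h)]
  exact Nat.le_succ_of_pred_le pred_card_le_card_erase

lemma card_insert_erase_inter_le_succ : (insert y (B.erase d) ∩ X).card ≤ (B ∩ X).card + 1 :=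
  (card_le_card fun x => by simp only [mem_inter, mem_insert, mem_erase]; tauto).trans
    (card_insert_le _ _)

lemma card_insert_erase_inter_le (hd : d ∈ B) (h : y ∈ X → d ∈ X) :
    (insert y (B.erase d) ∩ X).card ≤ (B ∩ X).card := by
  by_cases hy : y ∈ X
  · rw [insert_inter_of_mem hy, erase_inter]
    exact (card_insert_le _ _).trans (card_erase_add_one (mem_inter.2 ⟨hd, h hy⟩)).le
  · rw [insert_inter_of_notMem hy, erase_inter]
    exact card_erase_le

end InsertErase

namespace UV

section Sum

variable {α : Type*} [GeneralizedBooleanAlgebra α] [DecidableRel (@Disjoint α _ _)]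
  [DecidableLE α] [DecidableEq α] {u v : α} {s : Finset α}

theorem sum_compression_lt (w : α → ℕ) (hw : ∀ a, compress u v a ≠ a → w (compress u v a) < w a)
    (hs : ¬ IsCompressed u v s) : ∑ a ∈ compression u v s, w a < ∑ a ∈ s, w a := by
  have h_moved : ({a ∈ s | compress u v a ∉ s}).Nonempty := by
    rw [nonempty_iff_ne_empty]
    intro h
    apply hs
    rw [IsCompressed, compression, filter_image, h, image_empty, union_empty,
      filter_true_of_mem]
    intro a ha
    by_contra h'
    exact notMem_empty a (h ▸ mem_filter.2 ⟨ha, h'⟩)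
  rw [compression, sum_union compress_disjoint, filter_image, sum_image compress_injOn,
    ← sum_filter_add_sum_filter_not s (fun a => compress u v a ∈ s)]
  refine add_lt_add_right (sum_lt_sum_of_nonempty h_moved fun a ha => hw a ?_) _
  intro h
  rw [mem_filter, h] at ha
  exact ha.2 ha.1

end Sum

section Singleton

variable {α : Type*} [DecidableEq α] {i j : α} {A B : Finset α}

theorem compress_singleton_of_mem (hij : i ≠ j) (hj : j ∈ A) (hi : i ∉ A) :
    compress {i} {j} A = insert i (A.erase j) := by
  rw [compress_of_disjoint_of_le (disjoint_singleton_left.2 hi) (singleton_subset_iff.2 hj)]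
  ext x
  simp only [sup_eq_union, mem_sdiff, mem_union, mem_singleton, mem_insert, mem_erase]
  grind

theorem compress_singleton_of_not (h : ¬ (j ∈ A ∧ i ∉ A)) : compress {i} {j} A = A := by
  rw [compress, if_neg]
  rwa [disjoint_singleton_left, singleton_subset_iff, and_comm]

theorem card_inter_le_card_compress_inter (hij : i ≠ j) (hB : ¬ (j ∈ B ∧ i ∉ B)) :
    (A ∩ B).card ≤ (compress {i} {j} A ∩ B).card := by
  by_cases hA : j ∈ A ∧ i ∉ A
  · rw [compress_singleton_of_mem hij hA.1 hA.2]
    by_cases hiB : i ∈ B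
    · rw [insert_inter_of_mem hiB, erase_inter]
      exact card_le_card_insert_erase fun h => hA.2 (mem_inter.1 h).1
    · have hjB : j ∉ B := fun h => hB ⟨h, hiB⟩
      rw [insert_inter_of_notMem hiB, erase_inter,
        erase_eq_of_notMem fun h => hjB (mem_inter.1 h).2]
  · rw [compress_singleton_of_not hA]

theorem card_inter_le_card_compress_inter_compress (hij : i ≠ j) :
    (A ∩ B).card ≤ (compress {i} {j} A ∩ compress {i} {j} B).card := by
  by_cases hB : j ∈ B ∧ i ∉ B
  · by_cases hA : j ∈ A ∧ i ∉ A
    · rw [compress_singleton_of_mem hij hA.1 hA.2, compress_singleton_of_mem hij hB.1 hB.2,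
        ← insert_inter_distrib, erase_inter, inter_erase, erase_idem]
      exact card_le_card_insert_erase fun h => hA.2 (mem_inter.1 h).1
    · rw [compress_singleton_of_not hA, inter_comm, inter_comm A]
      exact card_inter_le_card_compress_inter hij hA
  · rw [compress_singleton_of_not hB]
    exact card_inter_le_card_compress_inter hij hB

theorem le_card_compress_inter {t : ℕ} (hij : i ≠ j) (h : t ≤ (A ∩ B).card)
    (h' : t ≤ (A ∩ compress {i} {j} B).card) : t ≤ (compress {i} {j} A ∩ B).card := by
  by_cases hA : j ∈ A ∧ i ∉ A
  · by_cases hB : j ∈ B ∧ i ∉ B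
    · -- both sets move, and both intersections lose exactly `j`
      convert h' using 2
      rw [compress_singleton_of_mem hij hA.1 hA.2, compress_singleton_of_mem hij hB.1 hB.2,
        insert_inter_of_notMem hB.2, inter_insert_of_notMem hA.2, erase_inter, inter_erase]
    · exact h.trans (card_inter_le_card_compress_inter hij hB)
  · rwa [compress_singleton_of_not hA]

end Singleton

end UV

lemma mem_gs {n x : ℕ} : x ∈ gs n ↔ 0 < x ∧ x ≤ n := by
  simp [gs, Nat.one_le_iff_ne_zero, Nat.pos_iff_ne_zero]

lemma gs_eq_Ioc (n : ℕ) : gs n = Ioc 0 n := Icc_succ_left_eq_Ioc 0 n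

@[simp] lemma gs_zero : gs 0 = ∅ := rfl

@[simp] lemma card_gs (n : ℕ) : (gs n).card = n := by simp [gs]

lemma card_inter_gs_le (X : Finset ℕ) (s : ℕ) : (X ∩ gs s).card ≤ s :=
  (card_le_card inter_subset_right).trans (card_gs s).le

lemma inter_gs_min {n : ℕ} {X : Finset ℕ} (hX : X ⊆ gs n) (s : ℕ) :
    X ∩ gs (min s n) = X ∩ gs s := by
  ext x
  have := @hX x
  simp only [mem_inter, mem_gs] at this ⊢
  grind

open UV

lemma UniformOn.compression {n m i j : ℕ} {F : Finset (Finset ℕ)} (hF : UniformOn n m F)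
    (hi : 0 < i) (hij : i < j) : UniformOn n m (compression {i} {j} F) := by
  intro A hA
  rcases mem_compression.1 hA with ⟨hAF, -⟩ | ⟨-, B, hBF, rfl⟩
  · exact hF A hAF
  obtain ⟨hBn, hBm⟩ := hF B hBF
  refine ⟨?_, by rw [card_compress (by simp), hBm]⟩
  by_cases hB : j ∈ B ∧ i ∉ B
  · rw [compress_singleton_of_mem hij.ne hB.1 hB.2]
    refine insert_subset (mem_gs.2 ⟨hi, ?_⟩) ((erase_subset _ _).trans hBn)
    exact hij.le.trans (mem_gs.1 (hBn hB.1)).2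
  · rwa [compress_singleton_of_not hB]

lemma CrossInt.compression {t i j : ℕ} {F G : Finset (Finset ℕ)} (h : CrossInt t F G)
    (hij : i ≠ j) : CrossInt t (compression {i} {j} F) (compression {i} {j} G) := by
  intro A' hA' B' hB'
  rcases mem_compression.1 hA' with ⟨hA'F, hcA'F⟩ | ⟨-, A, hAF, rfl⟩ <;>
  rcases mem_compression.1 hB' with ⟨hB'G, hcB'G⟩ | ⟨-, B, hBG, rfl⟩
  · exact h A' hA'F B' hB'G
  · rw [inter_comm]
    exact le_card_compress_inter hij (by rw [inter_comm]; exact h A' hA'F B hBG)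
      (by rw [inter_comm]; exact h _ hcA'F B hBG)
  · exact le_card_compress_inter hij (h A hAF B' hB'G) (h A hAF _ hcB'G)
  · exact (h A hAF B hBG).trans (card_inter_le_card_compress_inter_compress hij)

def IsShifted (G : Finset (Finset ℕ)) : Prop :=
  ∀ ⦃i j⦄, 0 < i → i < j → ∀ ⦃B⦄, B ∈ G → j ∈ B → i ∉ B → insert i (B.erase j) ∈ G

lemma isShifted_of_isCompressed {G : Finset (Finset ℕ)}
    (hG : ∀ i j, 0 < i → i < j → IsCompressed {i} {j} G) : IsShifted G := by
  intro i j hi hij B hB hjB hiB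
  rw [← compress_singleton_of_mem hij.ne hjB hiB, ← (hG i j hi hij).eq]
  exact compress_mem_compression hB

lemma sum_compress_singleton_lt {i j : ℕ} (hij : i < j) {B : Finset ℕ}
    (hB : compress {i} {j} B ≠ B) : ∑ x ∈ compress {i} {j} B, x < ∑ x ∈ B, x := by
  by_cases h : j ∈ B ∧ i ∉ B
  · rw [compress_singleton_of_mem hij.ne h.1 h.2,
      sum_insert fun hi => h.2 (mem_of_mem_erase hi), ← sum_erase_add B _ h.1]
    omega
  · exact absurd (compress_singleton_of_not h) hB

-- Shifting terminates: a proper compression `{i} {j}` with `i < j` lowers the element sum of `G`.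
lemma exists_isShifted_of_crossInt {n a b t : ℕ} {F G : Finset (Finset ℕ)}
    (hF : UniformOn n a F) (hG : UniformOn n b G) (hFG : CrossInt t F G) :
    ∃ F' G', UniformOn n a F' ∧ F'.card = F.card ∧ UniformOn n b G' ∧ G'.card = G.card ∧
      CrossInt t F' G' ∧ IsShifted G' := by
  induction hw : ∑ B ∈ G, ∑ x ∈ B, x using Nat.strong_induction_on generalizing F G with
  | _ w ih =>
  by_cases hc : ∀ i j, 0 < i → i < j → IsCompressed {i} {j} G
  · exact ⟨F, G, hF, rfl, hG, rfl, hFG, isShifted_of_isCompressed hc⟩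
  push Not at hc
  obtain ⟨i, j, hi, hij, hGij⟩ := hc
  obtain ⟨F', G', hF', hF'c, hG', hG'c, hF'G', hG'sh⟩ :=
    ih _ (hw ▸ sum_compression_lt _ (fun B => sum_compress_singleton_lt hij) hGij)
      (hF.compression hi hij) (hG.compression hi hij) (hFG.compression hij.ne) rfl
  exact ⟨F', G', hF', by rw [hF'c, card_compression], hG', by rw [hG'c, card_compression],
    hF'G', hG'sh⟩

lemma card_inter_gs_add_card_inter_gs {s d : ℕ} (hsd : s ≤ d) (A B : Finset ℕ) :
    (A ∩ gs d).card + (B ∩ gs d).card = (A ∩ gs s).card + (B ∩ gs s).card +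
      ((A ∪ B) ∩ Ioc s d).card + (A ∩ B ∩ Ioc s d).card := by
  have split (X : Finset ℕ) : (X ∩ gs d).card = (X ∩ gs s).card + (X ∩ Ioc s d).card := by
    rw [gs_eq_Ioc, gs_eq_Ioc, ← Ioc_union_Ioc_eq_Ioc (Nat.zero_le s) hsd, inter_union_distrib_left,
      card_union_of_disjoint]
    exact disjoint_of_subset_left inter_subset_right
      (disjoint_of_subset_right inter_subset_right (Ioc_disjoint_Ioc_of_le le_rfl))
  rw [split A, split B, union_inter_distrib_right, inter_inter_distrib_right]
  have := card_union_add_card_inter (A ∩ Ioc s d) (B ∩ Ioc s d)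
  omega

lemma exists_gap {A B : Finset ℕ} {d t : ℕ} (hdA : d ∈ A) (hAB : A ∩ B ⊆ gs d)
    (ht : t ≤ (A ∩ B).card) (hd : (A ∩ gs d).card + (B ∩ gs d).card < d + t) :
    ∃ y, 0 < y ∧ y < d ∧ y ∉ A ∪ B ∧ Ioc y d ⊆ A ∪ B := by
  have hne : (gs d \ (A ∪ B)).Nonempty := by
    rw [sdiff_nonempty]
    intro hsub
    have hcount := card_inter_gs_add_card_inter_gs (Nat.zero_le d) A B
    rw [← gs_eq_Ioc, inter_eq_right.2 hsub, inter_eq_left.2 hAB, card_gs, gs_zero, inter_empty,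
      inter_empty, card_empty] at hcount
    omega
  obtain ⟨hy, hyAB⟩ := mem_sdiff.1 (max'_mem _ hne)
  obtain ⟨hy0, hyd⟩ := mem_gs.1 hy
  refine ⟨_, hy0, lt_of_le_of_ne hyd ?_, hyAB, fun r hr => ?_⟩
  · intro h
    rw [h] at hyAB
    exact hyAB (mem_union_left _ hdA)
  obtain ⟨hyr, hrd⟩ := mem_Ioc.1 hr
  by_contra hrAB
  exact hyr.not_ge (le_max' _ r (mem_sdiff.2 ⟨mem_gs.2 ⟨by omega, hrd⟩, hrAB⟩))

-- For `y ≤ s < d` there is room for the extra element `y`: `(s, d]` is filled by `A ∪ B`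
-- and `d` is counted twice.
lemma card_inter_gs_add_card_insert_erase_lt {A B : Finset ℕ} {y d t : ℕ} (hyd : y < d)
    (hd : d ∈ A ∩ B) (hgap : Ioc y d ⊆ A ∪ B)
    (H : ∀ s, (A ∩ gs s).card + (B ∩ gs s).card < s + t) (s : ℕ) :
    (A ∩ gs s).card + (insert y (B.erase d) ∩ gs s).card < s + t := by
  by_cases hs : y ≤ s ∧ s < d
  · have hcount := card_inter_gs_add_card_inter_gs hs.2.le A B
    rw [inter_eq_right.2 ((Ioc_subset_Ioc_left hs.1).trans hgap), Nat.card_Ioc] at hcount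
    have hd' : 0 < (A ∩ B ∩ Ioc s d).card :=
      card_pos.2 ⟨d, mem_inter.2 ⟨hd, mem_Ioc.2 ⟨hs.2, le_rfl⟩⟩⟩
    have := H d
    have := card_insert_erase_inter_le_succ (y := y) (d := d) (B := B) (X := gs s)
    omega
  · have hB := card_insert_erase_inter_le (y := y) (X := gs s) (mem_inter.1 hd).2 fun hys => by
      rw [mem_gs] at hys ⊢
      omega
    have := H s
    omega

lemma exists_card_inter_lt_of_forall_lt {G : Finset (Finset ℕ)} (hG : IsShifted G)
    {A : Finset ℕ} (hA : 0 ∉ A) {t : ℕ} {B : Finset ℕ} (hB : B ∈ G)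
    (H : ∀ s, (A ∩ gs s).card + (B ∩ gs s).card < s + t) : ∃ B' ∈ G, (A ∩ B').card < t := by
  induction hk : (A ∩ B).card using Nat.strong_induction_on generalizing B with
  | _ k ih =>
  by_cases hkt : k < t
  · exact ⟨B, hB, hk ▸ hkt⟩
  have ht : 0 < t := by simpa using H 0
  have hne : (A ∩ B).Nonempty := card_pos.1 (by omega)
  have hd := max'_mem _ hne
  have hABd : A ∩ B ⊆ gs ((A ∩ B).max' hne) := fun x hx =>
    mem_gs.2 ⟨Nat.pos_of_ne_zero fun h => hA (h ▸ (mem_inter.1 hx).1), le_max' _ x hx⟩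
  obtain ⟨y, hy, hyd, hyAB, hgap⟩ := exists_gap (mem_inter.1 hd).1 hABd (by omega) (H _)
  rw [mem_union, not_or] at hyAB
  refine ih _ ?_ (hG hy hyd hB (mem_inter.1 hd).2 hyAB.2)
    (card_inter_gs_add_card_insert_erase_lt hyd hd hgap H) rfl
  rw [← hk, inter_insert_of_notMem hyAB.1, inter_erase]
  exact card_erase_lt_of_mem hd

lemma exists_add_le_card_inter_gs {G : Finset (Finset ℕ)} (hG : IsShifted G) {A : Finset ℕ}
    (hA : 0 ∉ A) {t : ℕ} (hAG : ∀ B ∈ G, t ≤ (A ∩ B).card) {B : Finset ℕ} (hB : B ∈ G) :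
    ∃ s, s + t ≤ (A ∩ gs s).card + (B ∩ gs s).card := by
  by_contra! H
  obtain ⟨B', hB', h⟩ := exists_card_inter_lt_of_forall_lt hG hA hB H
  exact (hAG B' hB').not_gt h

lemma mem_biUnion_hirschF {n a b t s : ℕ} (ht : 0 < t) {A B : Finset ℕ}
    (hA : A ∈ (gs n).powersetCard a) (hB : B ∈ (gs n).powersetCard b)
    (hs : s + t ≤ (A ∩ gs s).card + (B ∩ gs s).card) :
    (A, B) ∈ ((gs n ×ˢ gs n ×ˢ gs n).filter (fun p => p.1 + p.2.1 = p.2.2 + t)).biUnion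
      (fun p => HirschF n a p.2.2 p.1 ×ˢ HirschF n b p.2.2 p.2.1) := by
  obtain ⟨s', hsn, hs'⟩ : ∃ s' ≤ n, s' + t ≤ (A ∩ gs s').card + (B ∩ gs s').card :=
    ⟨min s n, min_le_right s n, by
      rw [inter_gs_min (mem_powersetCard.1 hA).1, inter_gs_min (mem_powersetCard.1 hB).1]
      omega⟩
  have hAs := card_inter_gs_le A s'
  have hBs := card_inter_gs_le B s'
  refine mem_biUnion.2 ⟨((A ∩ gs s').card, s' + t - (A ∩ gs s').card, s'), ?_, ?_⟩
  · simp only [mem_filter, mem_product, mem_gs]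
    omega
  · simp only [mem_product, HirschF, mem_filter]
    exact ⟨⟨hA, le_rfl⟩, hB, by omega⟩

theorem compressed_pair_in_union_of_hirschorn_products_general (n a b t : ℕ)
    (ht : 0 < t)
    (F G : Finset (Finset ℕ))
    (hF : UniformOn n a F) (hG : UniformOn n b G) (hFG : CrossInt t F G) :
    ∃ Fs Gs : Finset (Finset ℕ),
      UniformOn n a Fs ∧ Fs.card = F.card ∧
      UniformOn n b Gs ∧ Gs.card = G.card ∧
      Fs ×ˢ Gs ⊆
        ((gs n ×ˢ gs n ×ˢ gs n).filter (fun p => p.1 + p.2.1 = p.2.2 + t)).biUnion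
          (fun p => HirschF n a p.2.2 p.1 ×ˢ HirschF n b p.2.2 p.2.1) := by
  obtain ⟨Fs, Gs, hFs, hFc, hGs, hGc, hcross, hshift⟩ := exists_isShifted_of_crossInt hF hG hFG
  refine ⟨Fs, Gs, hFs, hFc, hGs, hGc, fun ⟨A, B⟩ hAB => ?_⟩
  obtain ⟨hA, hB⟩ := mem_product.1 hAB
  have hA' : A ∈ (gs n).powersetCard a := mem_powersetCard.2 (hFs A hA)
  have hB' : B ∈ (gs n).powersetCard b := mem_powersetCard.2 (hGs B hB)
  have hA0 : 0 ∉ A := fun h => lt_irrefl 0 (mem_gs.1 ((hFs A hA).1 h)).1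
  obtain ⟨s, hs⟩ := exists_add_le_card_inter_gs hshift hA0 (hcross A hA) hB
  exact mem_biUnion_hirschF ht hA' hB' hs

/-- reformulation of Theorem 1. -/
theorem compressed_pair_in_union_of_hirschorn_products (n a b t : ℕ)
    (hn : 0 < n) (ha : 0 < a) (hb : 0 < b) (ht : 0 < t)
    (F G : Finset (Finset ℕ))
    (hF : UniformOn n a F) (hG : UniformOn n b G) (hFG : CrossInt t F G) :
    ∃ Fs Gs : Finset (Finset ℕ),
      UniformOn n a Fs ∧ Fs.card = F.card ∧
      UniformOn n b Gs ∧ Gs.card = G.card ∧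
      Fs ×ˢ Gs ⊆
        ((gs n ×ˢ gs n ×ˢ gs n).filter (fun p => p.1 + p.2.1 = p.2.2 + t)).biUnion
          (fun p => HirschF n a p.2.2 p.1 ×ˢ HirschF n b p.2.2 p.2.1) :=
  compressed_pair_in_union_of_hirschorn_products_general n a b t ht F G hF hG hFG
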